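/- Let H = ℓ²(ℕ) with canonical orthonormal basis {e_j}_{j∈ℕ}, and let K be the orthogonal projection of H onto the closed span of {e_j : j ≥ 2}. Define Φ = {φ_j}_{j∈ℕ} by φ_{2k−1} = e_k and φ_{2k} = 0 for all k ≥ 1, and Ψ = {ψ_j}_{j∈ℕ} by ψ₁ = 0, ψ₂ = e₁, ψ₃ = 0, ψ₄ = e₂, and ψ_{2k+1} = ψ_{2k+2} = e_{k+1} for all k ≥ 2 (so Φ = {e₁, 0, e₂, 0, e₃, 0, …} and Ψ = {0, e₁, 0, e₂, e₃, e₃, e₄, e₄, …}). Then Φ and Ψ are K-frames for H, but they are not K-woven: for σ = ℕ ∖ {1, 3}, the family {φ_j}_{j∈σ} ∪ {ψ_j}_{j∈σᶜ} is not a K-frame for H, since ∑_{j∈σ} |⟨e₂, φ_j⟩|² + ∑_{j∈σᶜ} |⟨e₂, ψ_j⟩|² = 0 while ‖K* e₂‖² = 1. -/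

import Mathlib

/- STATEMENT 14: in H = ℓ²(ℕ) (0-based canonical basis E 0, E 1, …; the paper's e_j is
E (j-1)), with K the orthogonal projection onto the closed span of {E k : k ≥ 1},
Φ = {e₁, 0, e₂, 0, e₃, 0, …} and Ψ = {0, e₁, 0, e₂, e₃, e₃, e₄, e₄, …} are K-frames but
are not K-woven: for σ = ℕ ∖ {1, 3} (0-based: ℕ ∖ {0, 2}) the weaving is not a K-frame,
since the weaving sum at e₂ = E 1 is 0 while ‖K* e₂‖² = 1. -/

local notation "⟪" x ", " y "⟫" => @inner ℂ _ _ x y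

noncomputable section

abbrev H2 : Type := lp (fun _ : ℕ => ℂ) 2

/-- The canonical orthonormal basis of ℓ²(ℕ) (0-based; the paper's `e_j` is `E (j-1)`). -/
def E (n : ℕ) : H2 := lp.single 2 n 1

/-- The closed span of {E k : k ≥ 1}, i.e. of the paper's {e_j : j ≥ 2}. -/
def S : Submodule ℂ H2 :=
  (Submodule.span ℂ (Set.range fun k : ℕ => E (k + 1))).topologicalClosure

/-- Φ = {e₁, 0, e₂, 0, e₃, 0, …} (0-based indexing): φ_{2k−1} = e_k, φ_{2k} = 0. -/
def Φ (n : ℕ) : H2 := if Even n then E (n / 2) else 0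

/-- Ψ = {0, e₁, 0, e₂, e₃, e₃, e₄, e₄, …} (0-based indexing). -/
def Ψ (n : ℕ) : H2 := if n = 0 ∨ n = 2 then 0 else E (n / 2)

/-- σ = ℕ ∖ {1, 3} in the paper's 1-based indexing, i.e. ℕ ∖ {0, 2} in 0-based indexing. -/
def σ₀ : Set ℕ := {n | n ≠ 0 ∧ n ≠ 2}

/-- `φ` is a `K`-frame with lower bound `A` and upper bound `B`. -/
def IsKFrameWith (K : H2 →L[ℂ] H2) (φ : ℕ → H2) (A B : ℝ) : Prop :=
  0 < A ∧ 0 < B ∧ ∀ f : H2,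
    Summable (fun j : ℕ => ‖⟪f, φ j⟫‖ ^ 2) ∧
    A * ‖ContinuousLinearMap.adjoint K f‖ ^ 2 ≤ ∑' j : ℕ, ‖⟪f, φ j⟫‖ ^ 2 ∧
    ∑' j : ℕ, ‖⟪f, φ j⟫‖ ^ 2 ≤ B * ‖f‖ ^ 2

/-! The hypotheses force `K` to be the orthogonal projection onto `S`, so `K* = K` has norm at
most `1` and fixes `e₂`; hence every ordinary frame is a `K`-frame. `Φ` runs through the basis once,
so it is a Parseval frame; `Ψ` runs through the basis once on one parity class of indices and
through part of it on the other, so it has frame bounds `1` and `2`. Weaving along `σ = ℕ ∖ {1, 3}`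
discards both copies of `e₂`, so `e₂` is orthogonal to the woven family although `‖K* e₂‖ = 1`. -/

lemma eq_starProjection_of_forall_mem_orthogonal {𝕜 E : Type*} [RCLike 𝕜]
    [NormedAddCommGroup E] [InnerProductSpace 𝕜 E] {U : Submodule 𝕜 E}
    [U.HasOrthogonalProjection] {K : E →L[𝕜] E}
    (h₁ : ∀ f, K f ∈ U) (h₂ : ∀ f, f - K f ∈ Uᗮ) : K = U.starProjection :=
  ContinuousLinearMap.ext fun f => (U.eq_starProjection_of_mem_orthogonal (h₁ f) (h₂ f)).symm

instance : S.HasOrthogonalProjection := by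
  unfold S
  infer_instance

lemma E_succ_mem_S (k : ℕ) : E (k + 1) ∈ S :=
  Submodule.le_topologicalClosure _ (Submodule.subset_span ⟨k, rfl⟩)

lemma norm_E (n : ℕ) : ‖E n‖ = 1 := by
  simp [E, lp.norm_single]

lemma inner_E_E_of_ne {m n : ℕ} (h : m ≠ n) : ⟪E m, E n⟫ = 0 := by
  simp [E, lp.inner_single_right, h.symm]

lemma norm_inner_E_sq (f : H2) (n : ℕ) : ‖⟪f, E n⟫‖ ^ 2 = ‖f n‖ ^ 2 := by
  simp [E, lp.inner_single_right]

lemma hasSum_norm_sq (f : H2) : HasSum (fun n => ‖f n‖ ^ 2) (‖f‖ ^ 2) := by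
  simpa using lp.hasSum_norm (p := 2) (by norm_num) f

lemma isKFrameWith_of_hasSum {K : H2 →L[ℂ] H2} {φ : ℕ → H2} {A B : ℝ} (hA : 0 < A)
    (hB : 0 < B) (hK : ‖K‖ ≤ 1)
    (hφ : ∀ f, ∃ s, HasSum (fun j => ‖⟪f, φ j⟫‖ ^ 2) s ∧ A * ‖f‖ ^ 2 ≤ s ∧ s ≤ B * ‖f‖ ^ 2) :
    IsKFrameWith K φ A B := by
  refine ⟨hA, hB, fun f => ?_⟩
  obtain ⟨s, hs, hAs, hsB⟩ := hφ f
  have hKf : ‖ContinuousLinearMap.adjoint K f‖ ≤ ‖f‖ := calc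
    _ ≤ ‖ContinuousLinearMap.adjoint K‖ * ‖f‖ := (ContinuousLinearMap.adjoint K).le_opNorm f
    _ = ‖K‖ * ‖f‖ := by rw [LinearIsometryEquiv.norm_map]
    _ ≤ ‖f‖ := mul_le_of_le_one_left (norm_nonneg f) hK
  rw [hs.tsum_eq]
  refine ⟨hs.summable, le_trans ?_ hAs, hsB⟩
  gcongr

lemma Φ_two_mul (k : ℕ) : Φ (2 * k) = E k := by
  simp [Φ]

lemma Φ_two_mul_add_one (k : ℕ) : Φ (2 * k + 1) = 0 := by
  simp [Φ]

lemma hasSum_norm_inner_Φ (f : H2) : HasSum (fun j => ‖⟪f, Φ j⟫‖ ^ 2) (‖f‖ ^ 2) := by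
  have heven : HasSum (fun k => ‖⟪f, Φ (2 * k)⟫‖ ^ 2) (‖f‖ ^ 2) := by
    simpa only [Φ_two_mul, norm_inner_E_sq] using hasSum_norm_sq f
  have hodd : HasSum (fun k => ‖⟪f, Φ (2 * k + 1)⟫‖ ^ 2) 0 := by
    simpa only [Φ_two_mul_add_one, inner_zero_right, norm_zero, sq, mul_zero] using hasSum_zero
  simpa using HasSum.even_add_odd (f := fun j => ‖⟪f, Φ j⟫‖ ^ 2) heven hodd

lemma Ψ_two_mul (k : ℕ) : Ψ (2 * k) = if k ≤ 1 then 0 else E k := by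
  unfold Ψ
  split_ifs <;> first | rfl | omega | simp

lemma Ψ_two_mul_add_one (k : ℕ) : Ψ (2 * k + 1) = E k := by
  simp [Ψ, Nat.mul_add_div]

lemma exists_hasSum_norm_inner_Ψ (f : H2) :
    ∃ s, HasSum (fun j => ‖⟪f, Ψ j⟫‖ ^ 2) s ∧ 1 * ‖f‖ ^ 2 ≤ s ∧ s ≤ 2 * ‖f‖ ^ 2 := by
  set g := fun k => ‖⟪f, Ψ (2 * k)⟫‖ ^ 2
  have hg : ∀ k, g k ≤ ‖f k‖ ^ 2 := fun k => by
    simp only [g, Ψ_two_mul]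
    split_ifs
    · simp
    · rw [norm_inner_E_sq]
  have hg_sum : Summable g :=
    (hasSum_norm_sq f).summable.of_nonneg_of_le (fun _ => by positivity) hg
  have hodd : HasSum (fun k => ‖⟪f, Ψ (2 * k + 1)⟫‖ ^ 2) (‖f‖ ^ 2) := by
    simpa only [Ψ_two_mul_add_one, norm_inner_E_sq] using hasSum_norm_sq f
  have hle : ∑' k, g k ≤ ‖f‖ ^ 2 := hasSum_le hg hg_sum.hasSum (hasSum_norm_sq f)
  have hnonneg : 0 ≤ ∑' k, g k := tsum_nonneg fun _ => by positivity
  exact ⟨_, HasSum.even_add_odd (f := fun j => ‖⟪f, Ψ j⟫‖ ^ 2) hg_sum.hasSum hodd,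
    by linarith, by linarith⟩

lemma inner_E_one_Φ_of_mem_σ₀ {j : ℕ} (hj : j ∈ σ₀) : ⟪E 1, Φ j⟫ = 0 := by
  obtain ⟨k, rfl | rfl⟩ := Nat.even_or_odd' j
  · have hk : 1 ≠ k := by rintro rfl; exact hj.2 rfl
    rw [Φ_two_mul, inner_E_E_of_ne hk]
  · rw [Φ_two_mul_add_one, inner_zero_right]

lemma Ψ_of_not_mem_σ₀ {j : ℕ} (hj : j ∉ σ₀) : Ψ j = 0 := by
  simp only [σ₀, Set.mem_ofPred_eq, not_and_or, not_not] at hj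
  exact if_pos hj

lemma weaving_sum_E_one_eq_zero :
    ∑' j : σ₀, ‖⟪E 1, Φ (j : ℕ)⟫‖ ^ 2 + ∑' j : ↥σ₀ᶜ, ‖⟪E 1, Ψ (j : ℕ)⟫‖ ^ 2 = 0 := by
  have hΦ (j : σ₀) : ‖⟪E 1, Φ (j : ℕ)⟫‖ ^ 2 = 0 := by
    rw [inner_E_one_Φ_of_mem_σ₀ j.2, norm_zero, sq, mul_zero]
  have hΨ (j : ↥σ₀ᶜ) : ‖⟪E 1, Ψ (j : ℕ)⟫‖ ^ 2 = 0 := by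
    rw [Ψ_of_not_mem_σ₀ j.2, inner_zero_right, norm_zero, sq, mul_zero]
  simp only [hΦ, hΨ, tsum_zero, add_zero]

theorem stmt14 (K : H2 →L[ℂ] H2)
    -- K is the orthogonal projection of H2 onto S
    (hK₁ : ∀ f : H2, K f ∈ S) (hK₂ : ∀ f : H2, f - K f ∈ Sᗮ) :
    (∃ A B : ℝ, IsKFrameWith K Φ A B) ∧
    (∃ A B : ℝ, IsKFrameWith K Ψ A B) ∧
    (∑' j : σ₀, ‖⟪E 1, Φ (j : ℕ)⟫‖ ^ 2 + ∑' j : ↥σ₀ᶜ, ‖⟪E 1, Ψ (j : ℕ)⟫‖ ^ 2 = 0) ∧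
    ‖ContinuousLinearMap.adjoint K (E 1)‖ ^ 2 = 1 ∧
    -- the weaving along σ₀ is not a K-frame
    ¬ ∃ A B : ℝ, 0 < A ∧ 0 < B ∧ ∀ f : H2,
        Summable (fun j : σ₀ => ‖⟪f, Φ (j : ℕ)⟫‖ ^ 2) ∧
        Summable (fun j : ↥σ₀ᶜ => ‖⟪f, Ψ (j : ℕ)⟫‖ ^ 2) ∧
        A * ‖ContinuousLinearMap.adjoint K f‖ ^ 2 ≤
          ∑' j : σ₀, ‖⟪f, Φ (j : ℕ)⟫‖ ^ 2 + ∑' j : ↥σ₀ᶜ, ‖⟪f, Ψ (j : ℕ)⟫‖ ^ 2 ∧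
        ∑' j : σ₀, ‖⟪f, Φ (j : ℕ)⟫‖ ^ 2 + ∑' j : ↥σ₀ᶜ, ‖⟪f, Ψ (j : ℕ)⟫‖ ^ 2 ≤
          B * ‖f‖ ^ 2 := by
  obtain rfl : K = S.starProjection := eq_starProjection_of_forall_mem_orthogonal hK₁ hK₂
  have hK : ‖ContinuousLinearMap.adjoint S.starProjection (E 1)‖ ^ 2 = 1 := by
    rw [(isSelfAdjoint_starProjection S).adjoint_eq,
      S.starProjection_eq_self_iff.2 (E_succ_mem_S 0), norm_E, one_pow]
  refine ⟨⟨1, 1, isKFrameWith_of_hasSum one_pos one_pos S.starProjection_norm_le fun f =>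
      ⟨_, hasSum_norm_inner_Φ f, by rw [one_mul], by rw [one_mul]⟩⟩,
    ⟨1, 2, isKFrameWith_of_hasSum one_pos two_pos S.starProjection_norm_le
      exists_hasSum_norm_inner_Ψ⟩,
    weaving_sum_E_one_eq_zero, hK, ?_⟩
  rintro ⟨A, B, hA, -, hweave⟩
  have hlower := (hweave (E 1)).2.2.1
  rw [weaving_sum_E_one_eq_zero, hK, mul_one] at hlower
  exact hlower.not_gt hA
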